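/- arXiv:2511.15663 — 4 statements merged into one kernel-verified Lean document; each statement's English description precedes it below -/
import Mathlib

section
/- Let A be a set, μ an infinite cardinal, and let T, T' ⊆ A^{<μ} be trees (sets of sequences of length < μ closed under initial segments). Let φ : T → T' be an order embedding (injective, and s ⊊ t iff φ(s) ⊊ φ(t)), and suppose T is <κ-splitting with κ = μ regular, i.e., every node of T has fewer than μ immediate successors in T. Then the induced map f_φ on branches, f_φ(x) = ⋃_{α<μ} φ(x↾α), has image f_φ([T]) closed in A^μ with the bounded topology. -/
/-- Transfinite sequences over `A` of arbitrary ordinal length. -/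
structure BSeq (A : Type) : Type 1 where
  len : Ordinal.{0}
  val : ∀ β : Ordinal.{0}, β < len → A

namespace BSeq

/-- `s` is an initial segment of `t`. -/
def Prefix {A : Type} (s t : BSeq A) : Prop :=
  ∃ h : s.len ≤ t.len, ∀ β (hβ : β < s.len), s.val β hβ = t.val β (lt_of_lt_of_le hβ h)

/-- `s` is a proper initial segment of `t`. -/
def SPrefix {A : Type} (s t : BSeq A) : Prop := s.Prefix t ∧ s.len < t.len

/-- `s` and `t` are incompatible. -/
def Incomp {A : Type} (s t : BSeq A) : Prop := ¬ s.Prefix t ∧ ¬ t.Prefix s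

end BSeq

/-- Branches of length `μ` through `A`, i.e. elements of `A^μ`. -/
def Branch (A : Type) (μ : Ordinal.{0}) : Type 1 := ∀ β : Ordinal.{0}, β < μ → A

/-- The restriction `x ↾ α` of a branch. -/
def Branch.restrict {A : Type} {μ : Ordinal.{0}} (x : Branch A μ) (α : Ordinal.{0})
    (h : α ≤ μ) : BSeq A :=
  ⟨α, fun β hβ => x β (lt_of_lt_of_le hβ h)⟩

/-- `s` is an initial segment of the branch `x`. -/
def BSeq.PrefixB {A : Type} {μ : Ordinal.{0}} (s : BSeq A) (x : Branch A μ) : Prop :=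
  ∃ h : s.len ≤ μ, ∀ β (hβ : β < s.len), s.val β hβ = x β (lt_of_lt_of_le hβ h)

/-- The body `[T]` of a tree `T ⊆ A^{<μ}`: branches all of whose restrictions lie in `T`. -/
def body {A : Type} (T : Set (BSeq A)) (μ : Ordinal.{0}) : Set (Branch A μ) :=
  {x | ∀ α (hα : α < μ), x.restrict α hα.le ∈ T}

/-- The bounded topology on `A^μ`, generated by the cylinders `[s]` for `s ∈ A^{<μ}`. -/
instance branchTop (A : Type) (μ : Ordinal.{0}) : TopologicalSpace (Branch A μ) :=
  TopologicalSpace.generateFrom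
    {U : Set (Branch A μ) | ∃ s : BSeq A, s.len < μ ∧ U = {x | s.PrefixB x}}

/-!
Let every cylinder `[y ↾ β]` meet the image, and let `S` be the set of nodes `s ∈ T` with
`φ s ⊑ y`; since `φ` is an order embedding, `S` is a chain.
If the lengths in `S` are cofinal in `μ`, the union of `S` is a branch `x ∈ [T]` with
`f_φ(x) = y`. Otherwise `S` is bounded below `μ`, and the nodes of `T` all of whose proper
initial segments lie in `S` are fewer than `μ` by `<μ`-splitting and regularity, so the lengths
of their images are bounded by some `σ < μ`. A point of the image agreeing with `y` below `σ`
comes from a branch `x ∈ [T]`; at the first level `n` with `x ↾ n ∉ S` the node `x ↾ n` is of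
that kind, so `φ (x ↾ n)` has length `≤ σ`, is an initial segment of `y`, and `x ↾ n ∈ S` after
all.
-/

universe u v

open Cardinal Order

theorem Cardinal.IsRegular.exists_lt_ord_forall_le {μ : Cardinal.{u}} (hreg : μ.IsRegular)
    {ι : Type v} (f : ι → Ordinal.{u}) (hι : Cardinal.lift.{u} #ι < Cardinal.lift.{v} μ)
    (hf : ∀ i, f i < μ.ord) : ∃ σ < μ.ord, ∀ i, f i ≤ σ := by
  refine ⟨⨆ i, f i, Ordinal.lift_iSup_lt_of_lt_cof ?_ hf,
    fun i => le_ciSup ⟨μ.ord, Set.forall_mem_range.mpr fun i => (hf i).le⟩ i⟩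
  rwa [← Ordinal.lift_cof, hreg.cof_ord]

namespace BSeq

variable {A : Type}

theorem ext' {s t : BSeq A} (hlen : s.len = t.len)
    (hval : ∀ β (h : β < s.len) (h' : β < t.len), s.val β h = t.val β h') : s = t := by
  obtain ⟨l, v⟩ := s
  obtain ⟨l', v'⟩ := t
  dsimp only at hlen
  subst hlen
  simp only [BSeq.mk.injEq, heq_eq_eq, true_and]
  funext β h
  exact hval β h h

theorem Prefix.eq_of_len_eq {s t : BSeq A} (h : s.Prefix t) (hl : s.len = t.len) : s = t :=
  ext' hl fun β hβ _ => h.2 β hβ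

theorem Prefix.trans_prefixB {μ : Ordinal} {s t : BSeq A} {x : Branch A μ}
    (h₁ : s.Prefix t) (h₂ : t.PrefixB x) : s.PrefixB x :=
  ⟨h₁.1.trans h₂.1, fun β hβ => (h₁.2 β hβ).trans (h₂.2 β (hβ.trans_le h₁.1))⟩

theorem PrefixB.prefix_of_len_le {μ : Ordinal} {s t : BSeq A} {y : Branch A μ}
    (hs : s.PrefixB y) (ht : t.PrefixB y) (hl : s.len ≤ t.len) : s.Prefix t :=
  ⟨hl, fun β hβ => (hs.2 β hβ).trans (ht.2 β (hβ.trans_le hl)).symm⟩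

theorem PrefixB.of_restrict_prefixB {μ β : Ordinal} {s : BSeq A} {y z : Branch A μ}
    {hβ : β ≤ μ} (hs : s.PrefixB z) (hyz : (y.restrict β hβ).PrefixB z) (hl : s.len ≤ β) :
    s.PrefixB y :=
  ⟨hl.trans hβ, fun γ hγ => (hs.2 γ hγ).trans (hyz.2 γ (hγ.trans_le hl)).symm⟩

def cut (t : BSeq A) (α : Ordinal) (h : α ≤ t.len) : BSeq A :=
  ⟨α, fun β hβ => t.val β (hβ.trans_le h)⟩

theorem cut_prefix (t : BSeq A) {α : Ordinal} (h : α ≤ t.len) : (t.cut α h).Prefix t :=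
  ⟨h, fun _ _ => rfl⟩

theorem val_eq_of_isChain {S : Set (BSeq A)} (hS : IsChain Prefix S) {s t : BSeq A}
    (hs : s ∈ S) (ht : t ∈ S) {β : Ordinal} (hβs : β < s.len) (hβt : β < t.len) :
    s.val β hβs = t.val β hβt := by
  obtain rfl | hne := eq_or_ne s t
  · rfl
  rcases hS hs ht hne with h | h
  · exact h.2 β hβs
  · exact (h.2 β hβt).symm

theorem eq_of_isChain {S : Set (BSeq A)} (hS : IsChain Prefix S) {s t : BSeq A}
    (hs : s ∈ S) (ht : t ∈ S) (hl : s.len = t.len) : s = t :=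
  ext' hl fun _ hβs hβt => val_eq_of_isChain hS hs ht hβs hβt

end BSeq

namespace Branch

variable {A : Type} {μ : Ordinal}

theorem restrict_prefixB (x : Branch A μ) {α : Ordinal} (h : α ≤ μ) :
    (x.restrict α h).PrefixB x :=
  ⟨h, fun _ _ => rfl⟩

theorem isClosed_of_forall_cylinder_meets {C : Set (Branch A μ)}
    (h : ∀ y : Branch A μ,
      (∀ β (hβ : β < μ), ∃ z ∈ C, (y.restrict β hβ.le).PrefixB z) → y ∈ C) :
    IsClosed C := by
  rw [← isOpen_compl_iff, isOpen_iff_forall_mem_open]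
  intro y hy
  obtain ⟨β, hβ, hmiss⟩ : ∃ β, ∃ hβ : β < μ, ∀ z ∈ C, ¬ (y.restrict β hβ.le).PrefixB z := by
    by_contra! hmeet
    exact hy (h y hmeet)
  exact ⟨{x | (y.restrict β hβ.le).PrefixB x}, fun z hz hzC => hmiss z hzC hz,
    .basic _ ⟨_, hβ, rfl⟩, y.restrict_prefixB hβ.le⟩

theorem exists_of_isChain {S : Set (BSeq A)} (hS : IsChain BSeq.Prefix S)
    (hcof : ∀ γ < μ, ∃ s ∈ S, γ < s.len) :
    ∃ x : Branch A μ, ∀ α (hα : α < μ), ∃ s ∈ S, (x.restrict α hα.le).SPrefix s := by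
  choose f hfS hlen using hcof
  refine ⟨fun γ hγ => (f γ hγ).val γ (hlen γ hγ), fun α hα => ⟨f α hα, hfS α hα, ?_, hlen α hα⟩⟩
  exact ⟨(hlen α hα).le, fun γ hγ =>
    BSeq.val_eq_of_isChain hS (hfS γ _) (hfS α hα) (hlen γ _) (hγ.trans (hlen α hα))⟩

end Branch

section Embedding

variable {A : Type} {T : Set (BSeq A)} {φ : BSeq A → BSeq A}

theorem isChain_preimage_prefixB {μ : Ordinal}
    (hinj : ∀ s ∈ T, ∀ t ∈ T, φ s = φ t → s = t)
    (hemb : ∀ s ∈ T, ∀ t ∈ T, (BSeq.SPrefix s t ↔ BSeq.SPrefix (φ s) (φ t)))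
    (y : Branch A μ) : IsChain BSeq.Prefix {s | s ∈ T ∧ (φ s).PrefixB y} := by
  have key : ∀ s t, s ∈ T ∧ (φ s).PrefixB y → t ∈ T ∧ (φ t).PrefixB y → s ≠ t →
      (φ s).len ≤ (φ t).len → s.Prefix t := by
    rintro s t ⟨hsT, hs⟩ ⟨htT, ht⟩ hne hl
    have hpre := hs.prefix_of_len_le ht hl
    have hlt : (φ s).len < (φ t).len :=
      hl.lt_of_ne fun heq => hne (hinj s hsT t htT (hpre.eq_of_len_eq heq))
    exact ((hemb s hsT t htT).mpr ⟨hpre, hlt⟩).1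
  intro s hs t ht hne
  rcases le_total (φ s).len (φ t).len with hl | hl
  · exact .inl (key s t hs ht hne hl)
  · exact .inr (key t s ht hs hne.symm hl)

end Embedding

section Frontier

variable {A : Type}

/-- For a chain `S` these are the members of `S`, the immediate successors of members of `S`,
and at most one node at each limit level. -/
def nodesOver (T S : Set (BSeq A)) : Set (BSeq A) :=
  {t | t ∈ T ∧ ∀ α (hα : α < t.len), t.cut α hα.le ∈ S}

variable {T S : Set (BSeq A)}

theorem len_le_succ_of_mem_nodesOver {δ : Ordinal} (hbd : ∀ s ∈ S, s.len ≤ δ) {t : BSeq A}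
    (ht : t ∈ nodesOver T S) : t.len ≤ succ δ := by
  by_contra! h
  exact (hbd _ (ht.2 _ h)).not_gt (lt_succ δ)

theorem subsingleton_nodesOver_of_isSuccPrelimit (hS : IsChain BSeq.Prefix S) {γ : Ordinal}
    (hγ : IsSuccPrelimit γ) : {t ∈ nodesOver T S | t.len = γ}.Subsingleton := by
  rintro t ⟨ht, rfl⟩ t' ⟨ht', hlen⟩
  refine BSeq.ext' hlen.symm fun α hα hα' => ?_
  exact BSeq.val_eq_of_isChain hS (ht.2 _ (hγ.succ_lt hα)) (ht'.2 _ ((hγ.succ_lt hα).trans_eq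
    hlen.symm)) (lt_succ α) (lt_succ α)

theorem nodesOver_len_succ_subset (hS : IsChain BSeq.Prefix S) {γ : Ordinal} {t₀ : BSeq A}
    (ht₀ : t₀ ∈ nodesOver T S) (hlen : t₀.len = succ γ) :
    {t ∈ nodesOver T S | t.len = succ γ} ⊆
      {t | t ∈ T ∧ (t₀.cut γ (hlen ▸ le_succ γ)).Prefix t ∧
        t.len = (t₀.cut γ (hlen ▸ le_succ γ)).len + 1} := by
  rintro t ⟨ht, htlen⟩
  have hγt : γ < t.len := htlen ▸ lt_succ γ
  have hcut : t.cut γ hγt.le = t₀.cut γ (hlen ▸ le_succ γ) :=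
    BSeq.eq_of_isChain hS (ht.2 γ hγt) (ht₀.2 γ (hlen ▸ lt_succ γ)) rfl
  exact ⟨ht.1, hcut ▸ t.cut_prefix hγt.le, htlen.trans (succ_eq_add_one γ)⟩

theorem mk_nodesOver_lt {μ : Cardinal.{0}} (hreg : μ.IsRegular)
    (hsplit : ∀ s ∈ T,
      Cardinal.mk {t : BSeq A // t ∈ T ∧ BSeq.Prefix s t ∧ t.len = s.len + 1}
        < Cardinal.lift.{1} μ)
    (hST : S ⊆ T) (hS : IsChain BSeq.Prefix S) {δ : Ordinal} (hδ : δ < μ.ord)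
    (hbd : ∀ s ∈ S, s.len ≤ δ) : #(nodesOver T S) < lift.{1} μ := by
  have hlim : IsSuccLimit μ.ord := isSuccLimit_ord hreg.aleph0_le
  have hone : (1 : Cardinal) < lift.{1} μ :=
    one_lt_aleph0.trans_le (aleph0_le_lift.mpr hreg.aleph0_le)
  have hcover : nodesOver T S ⊆ ⋃ γ : Set.Iio (succ (succ δ)), {t ∈ nodesOver T S | t.len = γ} :=
    fun t ht => Set.mem_iUnion.mpr
      ⟨⟨t.len, (len_le_succ_of_mem_nodesOver hbd ht).trans_lt (lt_succ _)⟩, ht, rfl⟩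
  refine (mk_le_mk_of_subset hcover).trans_lt <| (mk_iUnion_le_sum_mk).trans_lt <|
    sum_lt_lift_of_isRegular.{1, 1} hreg.lift ?_ ?_
  · rw [lift_id, mk_Iio_ordinal, lift_lt, ← lt_ord]
    exact hlim.succ_lt (hlim.succ_lt hδ)
  rintro ⟨γ, -⟩
  by_cases hγ : IsSuccPrelimit γ
  · exact (mk_le_one_iff_set_subsingleton.mpr
      (subsingleton_nodesOver_of_isSuccPrelimit hS hγ)).trans_lt hone
  obtain ⟨γ₀, -, rfl⟩ := not_isSuccPrelimit_iff_succ_eq.mp hγ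
  obtain hempty | ⟨t₀, ht₀, hlen⟩ := Set.eq_empty_or_nonempty {t ∈ nodesOver T S | t.len = succ γ₀}
  · rw [hempty, mk_eq_zero]
    exact zero_lt_one.trans hone
  exact (mk_le_mk_of_subset (nodesOver_len_succ_subset hS ht₀ hlen)).trans_lt
    (hsplit _ (hST (ht₀.2 γ₀ (hlen ▸ lt_succ γ₀))))

theorem Branch.exists_restrict_mem_nodesOver_not_mem {μ : Ordinal} {x : Branch A μ}
    (hx : x ∈ body T μ) {α : Ordinal} (hα : α < μ) (hαS : x.restrict α hα.le ∉ S) :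
    ∃ n, ∃ hn : n < μ, x.restrict n hn.le ∈ nodesOver T S ∧ x.restrict n hn.le ∉ S := by
  obtain ⟨n, ⟨hn, hnS⟩, hmin⟩ :=
    Ordinal.lt_wf.has_min {n | ∃ hn : n < μ, x.restrict n hn.le ∉ S} ⟨α, hα, hαS⟩
  refine ⟨n, hn, ⟨hx n hn, fun β hβ => ?_⟩, hnS⟩
  by_contra hβS
  exact hmin β ⟨hβ.trans hn, hβS⟩ hβ

end Frontier

theorem image_of_branch_map_is_closed_general {A : Type} (μ : Cardinal.{0}) (hreg : μ.IsRegular)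
    (T T' : Set (BSeq A))
    (hT'len : ∀ s ∈ T', s.len < μ.ord)
    (hTtree : ∀ s ∈ T, ∀ t : BSeq A, t.Prefix s → t ∈ T)
    (φ : BSeq A → BSeq A)
    (hrange : ∀ s ∈ T, φ s ∈ T')
    (hinj : ∀ s ∈ T, ∀ t ∈ T, φ s = φ t → s = t)
    (hemb : ∀ s ∈ T, ∀ t ∈ T, (BSeq.SPrefix s t ↔ BSeq.SPrefix (φ s) (φ t)))
    (hsplit : ∀ s ∈ T,
      Cardinal.mk {t : BSeq A // t ∈ T ∧ BSeq.Prefix s t ∧ t.len = s.len + 1}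
        < Cardinal.lift.{1} μ) :
    IsClosed {y : Branch A μ.ord |
      ∃ x ∈ body T μ.ord, ∀ α (hα : α < μ.ord),
        BSeq.PrefixB (φ (Branch.restrict x α hα.le)) y} := by
  refine Branch.isClosed_of_forall_cylinder_meets fun y hy => ?_
  set S := {s | s ∈ T ∧ (φ s).PrefixB y}
  have hS : IsChain BSeq.Prefix S := isChain_preimage_prefixB hinj hemb y
  by_cases hbd : ∃ δ < μ.ord, ∀ s ∈ S, s.len ≤ δ
  · obtain ⟨δ, hδ, hbd⟩ := hbd
    have hsucc : succ δ < μ.ord := (isSuccLimit_ord hreg.aleph0_le).succ_lt hδ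
    obtain ⟨σ, hσ, hσle⟩ := hreg.exists_lt_ord_forall_le (fun t : nodesOver T S => (φ t).len)
      (by simpa using mk_nodesOver_lt hreg hsplit (fun s hs => hs.1) hS hδ hbd)
      (fun t => hT'len _ (hrange _ t.2.1))
    obtain ⟨z, ⟨x, hxT, hxz⟩, hyz⟩ := hy σ hσ
    obtain ⟨n, hn, hnT, hnS⟩ := Branch.exists_restrict_mem_nodesOver_not_mem hxT hsucc
      fun h => (hbd _ h).not_gt (lt_succ δ)
    exact (hnS ⟨hxT n hn, (hxz n hn).of_restrict_prefixB hyz (hσle ⟨_, hnT⟩)⟩).elim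
  · push Not at hbd
    obtain ⟨x, hx⟩ := Branch.exists_of_isChain hS hbd
    have hxS : ∀ α (hα : α < μ.ord), x.restrict α hα.le ∈ S := fun α hα => by
      obtain ⟨s, hs, hxs⟩ := hx α hα
      have hxT := hTtree s hs.1 _ hxs.1
      exact ⟨hxT, ((hemb _ hxT _ hs.1).mp hxs).1.trans_prefixB hs.2⟩
    exact ⟨x, fun α hα => (hxS α hα).1, fun α hα => (hxS α hα).2⟩

/-- If `φ : T → T'` is an order embedding between trees `T, T' ⊆ A^{<μ}`, `μ` regular,
and `T` is `<μ`-splitting, then the image of the induced map on branches,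
`f_φ([T]) = {y | ∃ x ∈ [T], ∀ α < μ, φ(x↾α) ⊑ y}`, is closed in `A^μ` with the
bounded topology. -/
theorem image_of_branch_map_is_closed {A : Type} (μ : Cardinal.{0}) (hreg : μ.IsRegular)
    (T T' : Set (BSeq A))
    (hTlen : ∀ s ∈ T, s.len < μ.ord) (hT'len : ∀ s ∈ T', s.len < μ.ord)
    (hTtree : ∀ s ∈ T, ∀ t : BSeq A, t.Prefix s → t ∈ T)
    (hT'tree : ∀ s ∈ T', ∀ t : BSeq A, t.Prefix s → t ∈ T')
    (φ : BSeq A → BSeq A)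
    (hrange : ∀ s ∈ T, φ s ∈ T')
    (hinj : ∀ s ∈ T, ∀ t ∈ T, φ s = φ t → s = t)
    (hemb : ∀ s ∈ T, ∀ t ∈ T, (BSeq.SPrefix s t ↔ BSeq.SPrefix (φ s) (φ t)))
    (hsplit : ∀ s ∈ T,
      Cardinal.mk {t : BSeq A // t ∈ T ∧ BSeq.Prefix s t ∧ t.len = s.len + 1}
        < Cardinal.lift.{1} μ) :
    IsClosed {y : Branch A μ.ord |
      ∃ x ∈ body T μ.ord, ∀ α (hα : α < μ.ord),
        BSeq.PrefixB (φ (Branch.restrict x α hα.le)) y} :=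
  image_of_branch_map_is_closed_general μ hreg T T' hT'len hTtree φ hrange hinj hemb hsplit
end

section
/- Let I be a set with |I| ≤ 2^κ for an infinite cardinal κ with κ^{<κ} = κ, and for each i ∈ I let X_i be a topological space with a dense subset of cardinality at most κ. Then the product ∏_{i∈I} X_i, endowed with the <κ-box topology (basic open sets are products ∏ U_i where U_i ⊆ X_i is open and U_i ≠ X_i for fewer than κ-many indices i), has a dense subset of cardinality at most κ. -/
/-!
Identify `κ` with a set `K` of size `κ`, enumerate a dense subset of each factor as
`g i : K → X i`, and use `|I| ≤ 2^κ` to code each index `i` by a subset `f i ⊆ K`.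
A small box restricts fewer than `κ` coordinates `T`; fewer than `κ` points of `K` suffice to
separate the codes of the indices in `T`, so a set `B ⊆ K` with `|B| < κ` makes the traces
`f i ∩ B` distinct on `T`. A point of the dense set is then determined by such a `B` and a
partial assignment of points of `K` to fewer than `κ` traces, and `κ^{<κ} = κ` bounds the number
of these data by `κ`.
-/

open Cardinal hiding univ
open Set Function TopologicalSpace

universe u v

namespace Cardinal

theorem mk_Iio_le_lift (κ : Cardinal.{u}) : #(Iio κ) ≤ lift.{u + 1} κ :=
  calc #(Iio κ) ≤ #(Iio κ.ord) :=
        mk_le_of_injective (f := fun c => ⟨c.1.ord, ord_lt_ord.2 c.2⟩)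
          fun c d h => Subtype.ext (ord_injective (congrArg Subtype.val h))
    _ = lift.{u + 1} κ := by rw [mk_Iio_ordinal, card_ord]

theorem mk_setOf_subset_mk_lt_le {α : Type u} {s : Set α} {κ : Cardinal.{u}} (hκ : ℵ₀ ≤ κ)
    (hκκ : κ ^< κ = κ) (hs : #s ≤ κ) : #{t : Set α | t ⊆ s ∧ #t < κ} ≤ κ := by
  have hcover : {t : Set α | t ⊆ s ∧ #t < κ} ⊆ ⋃ c : Iio κ, {t | t ⊆ s ∧ #t ≤ c} :=
    fun t ⟨hts, ht⟩ => mem_iUnion.2 ⟨⟨#t, ht⟩, hts, le_rfl⟩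
  have hpiece (c : Iio κ) : #{t : Set α | t ⊆ s ∧ #t ≤ c} ≤ κ :=
    calc #{t : Set α | t ⊆ s ∧ #t ≤ c} ≤ max #s ℵ₀ ^ (c : Cardinal) := mk_bounded_subset_le s c
      _ ≤ κ ^ (c : Cardinal) := power_le_power_right (max_le hs hκ)
      _ ≤ κ := (le_powerlt κ c.2).trans hκκ.le
  rw [← lift_le.{u + 1}]
  calc lift.{u + 1} #{t : Set α | t ⊆ s ∧ #t < κ}
      ≤ lift.{u + 1} #(⋃ c : Iio κ, {t : Set α | t ⊆ s ∧ #t ≤ c}) :=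
        lift_le.2 (mk_le_mk_of_subset hcover)
    _ ≤ lift.{u} #(Iio κ) * ⨆ c : Iio κ, lift.{u + 1} #{t : Set α | t ⊆ s ∧ #t ≤ c} :=
        mk_iUnion_le_lift _
    _ ≤ lift.{u + 1} κ * lift.{u + 1} κ :=
        mul_le_mul' (by rw [lift_id'.{u, u + 1}]; exact mk_Iio_le_lift κ)
          (ciSup_le' fun c => lift_le.2 (hpiece c))
    _ = lift.{u + 1} κ := by rw [← lift_mul, mul_eq_self hκ]

theorem mk_setOf_mk_lt_le {α : Type u} {κ : Cardinal.{u}} (hκ : ℵ₀ ≤ κ) (hκκ : κ ^< κ = κ)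
    (hα : #α ≤ κ) : #{t : Set α | #t < κ} ≤ κ :=
  calc #{t : Set α | #t < κ} ≤ #{t : Set α | t ⊆ Set.univ ∧ #t < κ} :=
        mk_le_mk_of_subset fun t ht => ⟨subset_univ t, ht⟩
    _ ≤ κ := mk_setOf_subset_mk_lt_le hκ hκκ (by rwa [mk_univ])

end Cardinal

theorem exists_injOn_inter_of_injective {ι α : Type u} {f : ι → Set α} (hf : Injective f)
    (T : Set ι) : ∃ B : Set α, #B ≤ #(T × T) ∧ InjOn (fun i => f i ∩ B) T := by
  let sep (p : {p : T × T // f p.1 ≠ f p.2}) : α := (symmDiff_nonempty.2 p.2).some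
  refine ⟨range sep, mk_range_le.trans (mk_subtype_le _), fun s hs t ht hst => ?_⟩
  by_contra hne
  let k := sep ⟨(⟨s, hs⟩, ⟨t, ht⟩), hf.ne hne⟩
  have hk : k ∈ symmDiff (f s) (f t) := (symmDiff_nonempty.2 (hf.ne hne)).some_mem
  have hkB : k ∈ range sep := mem_range_self _
  have hiff : k ∈ f s ↔ k ∈ f t := by
    simpa [hkB] using congrArg (k ∈ ·) hst
  rw [mem_symmDiff] at hk
  tauto

section SmallBoxes

variable (κ : Cardinal.{u}) {I : Type u} (X : I → Type v) [∀ i, TopologicalSpace (X i)]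

def smallBoxes : Set (Set (∀ i, X i)) :=
  {S | ∃ U : ∀ i, Set (X i), (∀ i, IsOpen (U i)) ∧ #{i : I // U i ≠ univ} < κ ∧
    S = pi univ U}

variable {κ X}

theorem univ_mem_smallBoxes (hκ : ℵ₀ ≤ κ) : univ ∈ smallBoxes κ X :=
  ⟨fun _ => univ, fun _ => isOpen_univ, by simpa using aleph0_pos.trans_le hκ, pi_univ _ |>.symm⟩

theorem inter_mem_smallBoxes (hκ : ℵ₀ ≤ κ) {S S' : Set (∀ i, X i)} (hS : S ∈ smallBoxes κ X)
    (hS' : S' ∈ smallBoxes κ X) : S ∩ S' ∈ smallBoxes κ X := by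
  obtain ⟨U, hUo, hU, rfl⟩ := hS
  obtain ⟨V, hVo, hV, rfl⟩ := hS'
  refine ⟨fun i => U i ∩ V i, fun i => (hUo i).inter (hVo i), ?_, pi_inter_distrib.symm⟩
  have hsupp : {i | U i ∩ V i ≠ univ} ⊆ {i | U i ≠ univ} ∪ {i | V i ≠ univ} := by
    intro i hi
    by_contra h
    simp only [mem_union, mem_ofPred_eq, not_or, not_not] at h
    exact hi (by rw [h.1, h.2, univ_inter])
  exact ((mk_le_mk_of_subset hsupp).trans (mk_union_le _ _)).trans_lt (add_lt_of_lt hκ hU hV)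

variable (κ X)

theorem isTopologicalBasis_smallBoxes (hκ : ℵ₀ ≤ κ) :
    @IsTopologicalBasis _ (generateFrom (smallBoxes κ X)) (smallBoxes κ X) := by
  have hbasis := isTopologicalBasis_of_subbasis_of_inter (t := generateFrom (smallBoxes κ X)) rfl
    fun _ hS _ hS' => inter_mem_smallBoxes hκ hS hS'
  rwa [insert_eq_of_mem (univ_mem_smallBoxes hκ)] at hbasis

end SmallBoxes

theorem Dense.exists_denseRange_of_mk_le {X K : Type u} [TopologicalSpace X] [Nonempty X]
    {D : Set X} (hD : Dense D) (hDK : #D ≤ #K) : ∃ g : K → X, DenseRange g := by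
  obtain ⟨e⟩ := (le_def _ _).1 hDK
  have := hD.nonempty.to_subtype
  exact ⟨Subtype.val ∘ invFun e,
    hD.denseRange_val.comp (invFun_surjective e.injective).denseRange continuous_subtype_val⟩

section Coding

variable {I K : Type u} {X : I → Type u} [∀ i, Nonempty (X i)]

open Classical in
/-- The point coded by a "window" `B ⊆ K` and a relation `R` from traces on `B` to points of `K`:
its `i`-th coordinate is `g i k` for some `k` that `R` attaches to the trace `f i ∩ B`. -/
noncomputable def tracePoint (f : I → Set K) (g : ∀ i, K → X i) (B : Set K)
    (R : Set (Set K × K)) (i : I) : X i :=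
  if h : ∃ k, (f i ∩ B, k) ∈ R then g i h.choose else Classical.arbitrary _

theorem tracePoint_apply_of_injOn {f : I → Set K} {g : ∀ i, K → X i} {B : Set K} {T : Set I}
    (hT : InjOn (fun i => f i ∩ B) T) (a : I → K) {i : I} (hi : i ∈ T) :
    tracePoint f g B ((fun t => (f t ∩ B, a t)) '' T) i = g i (a i) := by
  have hex : ∃ k, (f i ∩ B, k) ∈ (fun t => (f t ∩ B, a t)) '' T := ⟨a i, i, hi, rfl⟩
  rw [tracePoint, dif_pos hex]
  obtain ⟨t, ht, hti⟩ := hex.choose_spec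
  obtain ⟨htrace, hk⟩ := Prod.mk.inj hti
  obtain rfl : t = i := hT ht hi htrace
  rw [← hk]

variable [∀ i, TopologicalSpace (X i)]

theorem exists_dense_smallBoxes_of_injective {κ : Cardinal.{u}} (hκ : ℵ₀ ≤ κ)
    (hκκ : κ ^< κ = κ) (hK : #K ≤ κ) {f : I → Set K} (hf : Injective f) {g : ∀ i, K → X i}
    (hg : ∀ i, DenseRange (g i)) :
    ∃ D : Set (∀ i, X i), #D ≤ κ ∧ @Dense _ (generateFrom (smallBoxes κ X)) D := by
  let windows : Set (Set K) := {B | #B < κ}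
  let relations : Set (Set (Set K × K)) := {R | R ⊆ {s : Set K | #s < κ} ×ˢ univ ∧ #R < κ}
  refine ⟨image2 (tracePoint f g) windows relations, ?_, ?_⟩
  · have hpairs : #↥({s : Set K | #s < κ} ×ˢ (univ : Set K)) ≤ κ := by
      rw [mk_congr (Equiv.Set.prod _ _), mk_prod, lift_id, lift_id, mk_univ]
      exact (mul_le_mul' (mk_setOf_mk_lt_le hκ hκκ hK) hK).trans (mul_eq_self hκ).le
    calc #(image2 (tracePoint f g) windows relations) ≤ #windows * #relations := mk_image2_le
      _ ≤ κ * κ :=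
          mul_le_mul' (mk_setOf_mk_lt_le hκ hκκ hK) (mk_setOf_subset_mk_lt_le hκ hκκ hpairs)
      _ = κ := mul_eq_self hκ
  let := generateFrom (smallBoxes κ X)
  refine (isTopologicalBasis_smallBoxes κ X hκ).dense_iff.2 ?_
  rintro _ ⟨U, hUo, hU, rfl⟩ ⟨y, hy⟩
  set T : Set I := {i | U i ≠ univ}
  choose a ha using fun i => (hg i).exists_mem_open (hUo i) ⟨y i, hy i trivial⟩
  obtain ⟨B, hBT, hinj⟩ := exists_injOn_inter_of_injective hf T
  have hB : #B < κ := hBT.trans_lt (by rw [mk_prod, lift_id]; exact mul_lt_of_lt hκ hU hU)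
  refine ⟨_, fun i _ => ?_, mem_image2_of_mem (show B ∈ windows from hB)
    (show (fun t => (f t ∩ B, a t)) '' T ∈ relations from ⟨?_, mk_image_le.trans_lt hU⟩)⟩
  · by_cases hi : i ∈ T
    · rw [tracePoint_apply_of_injOn hinj a hi]
      exact ha i
    · rw [not_not.1 hi]
      trivial
  · rintro _ ⟨i, -, rfl⟩
    exact ⟨(mk_le_mk_of_subset inter_subset_right).trans_lt hB, trivial⟩

end Coding

/-- Generalized Hewitt–Marczewski–Pondiczery theorem: if `κ^{<κ} = κ`, `|I| ≤ 2^κ`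
and every `X i` has a dense subset of size at most `κ`, then the product `∀ i, X i`
with the `<κ`-box topology has a dense subset of size at most `κ`. -/
theorem dense_subset_of_box_product (κ : Cardinal.{u}) (hκ : Cardinal.aleph0 ≤ κ)
    (hκκ : κ ^< κ = κ) {I : Type u} (hI : Cardinal.mk I ≤ 2 ^ κ)
    (X : I → Type u) [∀ i, TopologicalSpace (X i)]
    (hdense : ∀ i, ∃ D : Set (X i), Cardinal.mk D ≤ κ ∧ Dense D) :
    ∃ D : Set (∀ i, X i), Cardinal.mk D ≤ κ ∧
      @Dense _ (TopologicalSpace.generateFrom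
        {S : Set (∀ i, X i) | ∃ U : ∀ i, Set (X i), (∀ i, IsOpen (U i)) ∧
          Cardinal.mk {i : I // U i ≠ Set.univ} < κ ∧ S = Set.pi Set.univ U}) D := by
  by_cases hX : ∀ i, Nonempty (X i)
  · obtain ⟨f⟩ : Nonempty (I ↪ Set κ.out) := by rwa [← le_def, mk_set, mk_out]
    have hg (i : I) : ∃ g : κ.out → X i, DenseRange g :=
      let ⟨_, hDκ, hD⟩ := hdense i
      hD.exists_denseRange_of_mk_le (hDκ.trans (mk_out κ).ge)
    choose g hg using hg
    exact exists_dense_smallBoxes_of_injective hκ hκκ (mk_out κ).le f.injective hg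
  · obtain ⟨i, hi⟩ := not_forall.1 hX
    exact ⟨∅, by simp, fun x => (hi ⟨x i⟩).elim⟩
end

section
/- Let μ ≤ λ be infinite cardinals, X a topological space, and for each β < μ let Γ_β be a family of subsets of X with ∅ ∈ Γ_β, each admitting a 2^λ-universal set U_β ⊆ 2^λ × X (where 2^λ carries the bounded topology) such that the families Γ_β are closed under preimages of continuous maps 2^λ × X → 2^λ × X of the form g × id_X. Then the family (⋃_{β<μ} Γ_β)_{σ_μ} of unions of at most μ-many sets from ⋃_{β<μ} Γ_β also admits a 2^λ-universal set. -/
open Cardinal Ordinal Set Function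

section GodelOrder

variable {α : Type*} [LinearOrder α]

def godelKey (p : α × α) : α ×ₗ (α ×ₗ α) := toLex (max p.1 p.2, toLex p)

lemma godelKey_injective : Injective (godelKey (α := α)) :=
  fun _ _ h => toLex.injective (congrArg Prod.snd (toLex.injective h))

def GodelLT (p q : α × α) : Prop := godelKey p < godelKey q

instance [WellFoundedLT α] : IsWellOrder (α × α) GodelLT :=
  (RelEmbedding.preimage ⟨godelKey, godelKey_injective⟩ (· < ·)).isWellOrder

lemma godelLT_diag {a b m : α} (ha : a ≤ m) (hb : b < m) : GodelLT (a, b) (m, m) := by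
  simp only [GodelLT, godelKey, Prod.Lex.toLex_lt_toLex, max_self]
  grind

lemma setOf_godelLT_subset (p : α × α) :
    {q | GodelLT q p} ⊆ Iic (max p.1 p.2) ×ˢ Iic (max p.1 p.2) := by
  intro q hq
  have : max q.1 q.2 ≤ max p.1 p.2 := by
    rcases Prod.Lex.toLex_lt_toLex.mp hq with h | ⟨h, -⟩
    · exact h.le
    · exact h.le
  exact ⟨le_of_max_le_left this, le_of_max_le_right this⟩

end GodelOrder

lemma mk_Iic_toType_ord_lt {l : Cardinal} (hl : ℵ₀ ≤ l) (m : l.ord.ToType) : #(Iic m) < l := by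
  rw [← Iio_insert]
  exact mk_insert_le.trans_lt
    (add_lt_of_lt hl (by simpa using mk_Iio_lt m (by simp)) (one_lt_aleph0.trans_le hl))

lemma typein_godelLT_lt {l : Cardinal} (hl : ℵ₀ ≤ l) (p : l.ord.ToType × l.ord.ToType) :
    typein GodelLT p < l.ord := by
  rw [lt_ord, card_typein]
  set m := max p.1 p.2
  calc #{q // GodelLT q p} ≤ #(Iic m ×ˢ Iic m : Set _) :=
        mk_le_mk_of_subset (setOf_godelLT_subset p)
    _ = #(Iic m) * #(Iic m) := mk_setProd _ _
    _ < l := mul_lt_of_lt hl (mk_Iic_toType_ord_lt hl m) (mk_Iic_toType_ord_lt hl m)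

namespace Branch

variable {A : Type} {o : Ordinal.{0}}

def comap (e : Iio o → Iio o) (x : Branch A o) : Branch A o :=
  fun β hβ => x (e ⟨β, hβ⟩) (e ⟨β, hβ⟩).2

lemma isOpen_setOf_prefixB (s : BSeq A) (hs : s.len < o) :
    IsOpen {x : Branch A o | s.PrefixB x} :=
  TopologicalSpace.isOpen_generateFrom_of_mem ⟨s, hs, rfl⟩

lemma continuous_comap (e : Iio o → Iio o) (he : ∀ γ : Iio o, ∃ δ : Iio o, ∀ j < γ, e j < δ) :
    Continuous (comap (A := A) e) := by
  refine continuous_generateFrom_iff.mpr ?_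
  rintro _ ⟨s, hs, rfl⟩
  refine isOpen_iff_forall_mem_open.mpr fun y ⟨hso, hys⟩ => ?_
  obtain ⟨δ, hδ⟩ := he ⟨s.len, hs⟩
  refine ⟨{x | (y.restrict δ δ.2.le).PrefixB x}, ?_, isOpen_setOf_prefixB _ δ.2,
    ⟨δ.2.le, fun _ _ => rfl⟩⟩
  intro x ⟨_, hxy⟩
  exact ⟨hso, fun β hβ => (hys β hβ).trans (hxy _ (hδ ⟨β, hβ.trans hs⟩ hβ))⟩

lemma exists_comap_eq [Nonempty A] {K : Type} (E : K → Iio o → Iio o)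
    (hE : Injective fun p : K × Iio o => E p.1 p.2) (z : K → Branch A o) :
    ∃ y : Branch A o, ∀ k, comap (E k) y = z k := by
  refine ⟨fun β hβ => extend (fun p : K × Iio o => E p.1 p.2) (fun p => z p.1 p.2 p.2.2)
    (fun _ => Classical.arbitrary A) ⟨β, hβ⟩, fun k => funext₂ fun β hβ => ?_⟩
  exact hE.extend_apply (fun p => z p.1 p.2 p.2.2) (fun _ => Classical.arbitrary A)
    (k, ⟨β, hβ⟩)

end Branch

theorem exists_continuous_jointly_surjective {A : Type} [Nonempty A] {l : Cardinal.{0}}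
    (hl : ℵ₀ ≤ l) {K : Type} (hK : #K ≤ l) :
    ∃ g : K → Branch A l.ord → Branch A l.ord,
      (∀ k, Continuous (g k)) ∧ ∀ z : K → Branch A l.ord, ∃ y, ∀ k, g k y = z k := by
  obtain ⟨c⟩ : Nonempty (K ↪ l.ord.ToType) := by rwa [← le_def, mk_ord_toType]
  let E (k : K) (j : Iio l.ord) : Iio l.ord :=
    ⟨typein GodelLT (c k, ToType.mk j), typein_godelLT_lt hl _⟩
  refine ⟨fun k => Branch.comap (E k), fun k => Branch.continuous_comap _ fun γ => ?_,
    Branch.exists_comap_eq E ?_⟩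
  · let m := max (c k) (ToType.mk γ)
    refine ⟨⟨typein GodelLT (m, m), typein_godelLT_lt hl _⟩, fun j hj => ?_⟩
    exact (typein_lt_typein GodelLT).mpr <| godelLT_diag (le_max_left _ _) <|
      (ToType.mk.lt_iff_lt.mpr hj).trans_le (le_max_right _ _)
  · rintro ⟨k, j⟩ ⟨k', j'⟩ h
    obtain ⟨hk, hj⟩ := Prod.ext_iff.mp (typein_injective GodelLT (congrArg Subtype.val h))
    simp only at hk hj
    rw [c.injective hk, ToType.mk.injective hj]

section Sections

variable {X Y K : Type*}

lemma setOf_sections_iUnion_preimage {g : K → Y → Y}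
    (hg : ∀ z : K → Y, ∃ y, ∀ k, g k y = z k) (V : K → Set (Y × X)) :
    {S : Set X | ∃ y : Y, S = {x | (y, x) ∈ ⋃ k, (fun p : Y × X => (g k p.1, p.2)) ⁻¹' V k}} =
      {S | ∃ z : K → Y, S = ⋃ k, {x | (z k, x) ∈ V k}} := by
  ext S
  constructor
  · rintro ⟨y, rfl⟩
    exact ⟨fun k => g k y, by ext; simp⟩
  · rintro ⟨z, rfl⟩
    obtain ⟨y, hy⟩ := hg z
    exact ⟨y, by ext; simp [hy]⟩

lemma setOf_iUnion_sections_eq (V : K → Set (Y × X)) (F : K → Set (Set X))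
    (hF : ∀ k, F k = {T | ∃ y : Y, T = {x | (y, x) ∈ V k}}) :
    {S : Set X | ∃ z : K → Y, S = ⋃ k, {x | (z k, x) ∈ V k}} =
      {S | ∃ h : K → Set X, (∀ k, h k ∈ F k) ∧ S = ⋃ k, h k} := by
  simp_rw [hF]
  ext S
  constructor
  · rintro ⟨z, rfl⟩
    exact ⟨_, fun k => ⟨z k, rfl⟩, rfl⟩
  · rintro ⟨h, hh, rfl⟩
    choose z hz using hh
    exact ⟨z, by simp_rw [hz]⟩

end Sections

lemma exists_labelled_index_type {μ : Cardinal.{0}} (hμ : ℵ₀ ≤ μ) :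
    ∃ (K : Type) (β : K → Ordinal.{0}), #K ≤ μ ∧ (∀ k, β k < μ.ord) ∧
      ∀ (ι : Type) (b : ι → Ordinal.{0}), #ι ≤ μ → (∀ i, b i < μ.ord) →
        ∃ σ : ι → K, Injective σ ∧ ∀ i, β (σ i) = b i := by
  refine ⟨μ.ord.ToType × μ.ord.ToType, fun k => (ToType.mk.symm k.2).1, ?_,
    fun k => (ToType.mk.symm k.2).2, fun ι b hι hb => ?_⟩
  · rw [mk_prod, Cardinal.lift_id, mk_ord_toType, mul_eq_self hμ]
  obtain ⟨ρ⟩ : Nonempty (ι ↪ μ.ord.ToType) := by rwa [← le_def, mk_ord_toType]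
  refine ⟨fun i => (ρ i, ToType.mk ⟨b i, hb i⟩), fun i j h => ρ.injective (congrArg Prod.fst h),
    fun i => ?_⟩
  simp

lemma setOf_iUnion_labelled_eq_sigma_union {X : Type} {μ : Cardinal.{0}} {K : Type}
    {β : K → Ordinal.{0}} (hK : #K ≤ μ) (hβ : ∀ k, β k < μ.ord)
    (hσ : ∀ (ι : Type) (b : ι → Ordinal.{0}), #ι ≤ μ → (∀ i, b i < μ.ord) →
      ∃ σ : ι → K, Injective σ ∧ ∀ i, β (σ i) = b i)
    (G : Ordinal.{0} → Set (Set X)) (hempty : ∀ b < μ.ord, ∅ ∈ G b) :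
    {S | ∃ h : K → Set X, (∀ k, h k ∈ G (β k)) ∧ S = ⋃ k, h k} =
      {S : Set X | ∃ (ι : Type) (f : ι → Set X), #ι ≤ μ ∧
        (∀ i, ∃ b < μ.ord, f i ∈ G b) ∧ S = ⋃ i, f i} := by
  ext S
  constructor
  · rintro ⟨h, hh, rfl⟩
    exact ⟨K, h, hK, fun k => ⟨β k, hβ k, hh k⟩, rfl⟩
  · rintro ⟨ι, f, hι, hf, rfl⟩
    choose b hb hfb using hf
    obtain ⟨σ, hσinj, hσβ⟩ := hσ ι b hι hb
    refine ⟨extend σ f ⊥, fun k => ?_, (iSup_extend_bot hσinj f).symm⟩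
    by_cases hk : ∃ i, σ i = k
    · obtain ⟨i, rfl⟩ := hk
      rw [hσinj.extend_apply, hσβ]
      exact hfb i
    · rw [extend_apply' _ _ _ hk]
      exact hempty _ (hβ k)

theorem universal_set_for_sigma_union_general (μ l : Cardinal.{0})
    (hμ : Cardinal.aleph0 ≤ μ) (hμl : μ ≤ l)
    {X : Type}
    (G : Ordinal.{0} → Set (Set X))
    (GC : Ordinal.{0} → Set (Set (Branch Bool l.ord × X)))
    (Ub : Ordinal.{0} → Set (Branch Bool l.ord × X))
    (hempty : ∀ β < μ.ord, ∅ ∈ G β)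
    (hmem : ∀ β < μ.ord, Ub β ∈ GC β)
    (hsec : ∀ β < μ.ord,
      G β = {S : Set X | ∃ y : Branch Bool l.ord, S = {x : X | (y, x) ∈ Ub β}})
    (hclosure : ∀ β < μ.ord, ∀ A ∈ GC β,
      ∀ g : Branch Bool l.ord → Branch Bool l.ord, Continuous g →
        (fun p : Branch Bool l.ord × X => (g p.1, p.2)) ⁻¹' A ∈ GC β) :
    ∃ U : Set (Branch Bool l.ord × X),
      (∃ (ι : Type) (f : ι → Set (Branch Bool l.ord × X)), Cardinal.mk ι ≤ μ ∧
        (∀ i, ∃ β < μ.ord, f i ∈ GC β) ∧ U = ⋃ i, f i) ∧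
      {S : Set X | ∃ y : Branch Bool l.ord, S = {x : X | (y, x) ∈ U}} =
        {S : Set X | ∃ (ι : Type) (f : ι → Set X), Cardinal.mk ι ≤ μ ∧
          (∀ i, ∃ β < μ.ord, f i ∈ G β) ∧ S = ⋃ i, f i} := by
  obtain ⟨K, β, hK, hβ, hσ⟩ := exists_labelled_index_type hμ
  obtain ⟨g, hg, hgsurj⟩ :=
    exists_continuous_jointly_surjective (A := Bool) (hμ.trans hμl) (hK.trans hμl)
  refine ⟨⋃ k, (fun p => (g k p.1, p.2)) ⁻¹' Ub (β k),
    ⟨K, _, hK, fun k => ⟨β k, hβ k, hclosure _ (hβ k) _ (hmem _ (hβ k)) _ (hg k)⟩, rfl⟩, ?_⟩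
  rw [setOf_sections_iUnion_preimage hgsurj,
    setOf_iUnion_sections_eq _ (fun k => G (β k)) fun k => hsec _ (hβ k)]
  exact setOf_iUnion_labelled_eq_sigma_union hK hβ hσ G hempty

/-- Construction of universal sets for `σ_μ`-unions: if for each `β < μ` the family
`G β` of subsets of `X` contains `∅` and admits a `2^λ`-universal set `Ub β` lying in a
family `GC β` of subsets of `2^λ × X` closed under preimages along continuous maps of
the form `g × id_X`, then the family of unions of at most `μ`-many sets from
`⋃_{β<μ} G β` also admits a `2^λ`-universal set. -/
theorem universal_set_for_sigma_union (μ l : Cardinal.{0})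
    (hμ : Cardinal.aleph0 ≤ μ) (hμl : μ ≤ l)
    {X : Type} [TopologicalSpace X]
    (G : Ordinal.{0} → Set (Set X))
    (GC : Ordinal.{0} → Set (Set (Branch Bool l.ord × X)))
    (Ub : Ordinal.{0} → Set (Branch Bool l.ord × X))
    (hempty : ∀ β < μ.ord, ∅ ∈ G β)
    (hmem : ∀ β < μ.ord, Ub β ∈ GC β)
    (hsec : ∀ β < μ.ord,
      G β = {S : Set X | ∃ y : Branch Bool l.ord, S = {x : X | (y, x) ∈ Ub β}})
    (hclosure : ∀ β < μ.ord, ∀ A ∈ GC β,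
      ∀ g : Branch Bool l.ord → Branch Bool l.ord, Continuous g →
        (fun p : Branch Bool l.ord × X => (g p.1, p.2)) ⁻¹' A ∈ GC β) :
    ∃ U : Set (Branch Bool l.ord × X),
      (∃ (ι : Type) (f : ι → Set (Branch Bool l.ord × X)), Cardinal.mk ι ≤ μ ∧
        (∀ i, ∃ β < μ.ord, f i ∈ GC β) ∧ U = ⋃ i, f i) ∧
      {S : Set X | ∃ y : Branch Bool l.ord, S = {x : X | (y, x) ∈ U}} =
        {S : Set X | ∃ (ι : Type) (f : ι → Set X), Cardinal.mk ι ≤ μ ∧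
          (∀ i, ∃ β < μ.ord, f i ∈ G β) ∧ S = ⋃ i, f i} :=
  universal_set_for_sigma_union_general μ l hμ hμl G GC Ub hempty hmem hsec hclosure
end

section
/- Let λ be an infinite cardinal and X a topological space of weight at most λ. Then there exists a 2^λ-universal open set: an open subset U of 2^λ × X (with 2^λ carrying the bounded topology and the product the product topology) such that the open subsets of X are exactly the vertical sections U_y = {x ∈ X | (y,x) ∈ U} for y ∈ 2^λ. -/
/-! Enumerate a basis as `(e β)_{β < λ}`, padding with `∅`. A point `y ∈ 2^λ` codes the open set
`⋃ {e β | y β = 1}`, and every open set is coded this way by `y β = 1 ↔ e β ⊆ V`. Since `λ` is a limit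
ordinal, each coordinate condition `y β = 1` is decided by the restriction `y ↾ (β + 1)`, so it
defines an open subset of `2^λ`; hence `U = ⋃_β {y | y β = 1} × e β` is open. -/

open Cardinal

universe u

theorem exists_isOpen_family_range_supset {X : Type} [TopologicalSpace X] {B : Set (Set X)}
    (hB : ∀ b ∈ B, IsOpen b) {ι : Type u} (hBι : lift.{u} #B ≤ lift.{0} #ι) :
    ∃ e : ι → Set X, (∀ i, IsOpen (e i)) ∧ B ⊆ Set.range e := by
  obtain ⟨f⟩ := lift_mk_le'.mp hBι
  refine ⟨Function.extend f Subtype.val fun _ => ∅, fun i => ?_,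
    fun b hb => ⟨f ⟨b, hb⟩, f.injective.extend_apply _ _ _⟩⟩
  by_cases hi : ∃ b, f b = i
  · obtain ⟨b, rfl⟩ := hi
    rw [f.injective.extend_apply]
    exact hB b b.2
  · rw [Function.extend_apply' _ _ _ hi]
    exact isOpen_empty

namespace Branch

variable {A : Type} {μ : Ordinal.{0}}

theorem isOpen_setOf_apply_eq (hμ : Order.IsSuccLimit μ) {β : Ordinal.{0}} (hβ : β < μ) (a : A) :
    IsOpen {y : Branch A μ | y β hβ = a} := by
  rw [isOpen_iff_forall_mem_open]
  intro y hy
  have hsucc : Order.succ β < μ := hμ.succ_lt hβ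
  refine ⟨{z | (y.restrict (Order.succ β) hsucc.le).PrefixB z}, ?_,
    TopologicalSpace.isOpen_generateFrom_of_mem ⟨_, hsucc, rfl⟩, hsucc.le, fun _ _ => rfl⟩
  rintro z ⟨_, hyz⟩
  exact (hyz β (Order.lt_succ β)).symm.trans hy

variable {X : Type} [TopologicalSpace X]

def universalSet (e : Set.Iio μ → Set X) : Set (Branch Bool μ × X) :=
  {p | ∃ β : Set.Iio μ, p.1 β.1 β.2 = true ∧ p.2 ∈ e β}

theorem isOpen_universalSet (hμ : Order.IsSuccLimit μ) {e : Set.Iio μ → Set X}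
    (he : ∀ β, IsOpen (e β)) : IsOpen (universalSet e) := by
  have hU : universalSet e = ⋃ β : Set.Iio μ, {y : Branch Bool μ | y β.1 β.2 = true} ×ˢ e β := by
    ext p
    simp [universalSet]
  rw [hU]
  exact isOpen_iUnion fun β => (isOpen_setOf_apply_eq hμ β.2 true).prod (he β)

theorem isOpen_setOf_mem_universalSet {e : Set.Iio μ → Set X} (he : ∀ β, IsOpen (e β))
    (y : Branch Bool μ) : IsOpen {x : X | (y, x) ∈ universalSet e} := by
  rw [isOpen_iff_forall_mem_open]
  rintro x ⟨β, hy, hx⟩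
  exact ⟨e β, fun x' hx' => ⟨β, hy, hx'⟩, he β, hx⟩

theorem exists_eq_setOf_mem_universalSet {B : Set (Set X)}
    (hB : TopologicalSpace.IsTopologicalBasis B) {e : Set.Iio μ → Set X} (hBe : B ⊆ Set.range e)
    {V : Set X} (hV : IsOpen V) : ∃ y : Branch Bool μ, V = {x : X | (y, x) ∈ universalSet e} := by
  classical
  refine ⟨fun β hβ => decide (e ⟨β, hβ⟩ ⊆ V), Set.ext fun x => ⟨fun hx => ?_, ?_⟩⟩
  · obtain ⟨b, hb, hxb, hbV⟩ := hB.exists_subset_of_mem_open hx hV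
    obtain ⟨β, rfl⟩ := hBe hb
    exact ⟨β, decide_eq_true hbV, hxb⟩
  · rintro ⟨β, hβV, hxβ⟩
    exact of_decide_eq_true hβV hxβ

end Branch

/-- For `X` of weight at most `λ`, there is a `2^λ`-universal open set: an open
`U ⊆ 2^λ × X` whose vertical sections are exactly the open subsets of `X`. -/
theorem universal_open_set (l : Cardinal.{0}) (hl : Cardinal.aleph0 ≤ l)
    {X : Type} [TopologicalSpace X]
    (B : Set (Set X)) (hB : TopologicalSpace.IsTopologicalBasis B)
    (hBcard : Cardinal.mk B ≤ l) :
    ∃ U : Set (Branch Bool l.ord × X), IsOpen U ∧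
      {V : Set X | IsOpen V} =
        {V : Set X | ∃ y : Branch Bool l.ord, V = {x : X | (y, x) ∈ U}} := by
  have hBι : lift.{1} #B ≤ lift.{0} #(Set.Iio l.ord) := by
    rwa [mk_Iio_ordinal, card_ord, lift_id'.{0, 1}, lift_le]
  obtain ⟨e, he, hBe⟩ := exists_isOpen_family_range_supset (fun _ => hB.isOpen) hBι
  refine ⟨Branch.universalSet e, Branch.isOpen_universalSet (isSuccLimit_ord hl) he, ?_⟩
  ext V
  exact ⟨Branch.exists_eq_setOf_mem_universalSet hB hBe,
    fun ⟨y, hV⟩ => hV ▸ Branch.isOpen_setOf_mem_universalSet he y⟩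
end
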